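/- Let f ∈ L^∞(ℝ) be nonnegative and nonincreasing with bilateral-Laplace abscissa λ₀(f) > 0, and let g ∈ L^∞(ℝ) ∩ L¹(ℝ) be nonnegative with λ₀(g) > 0. Then the abscissa of convergence of the product f · (g * f) satisfies λ₀(f·(g*f)) ≥ λ₀(f) + min{λ₀(g), λ₀(f)}. -/

import Mathlib

open MeasureTheory

/-- The abscissa of convergence of the bilateral Laplace transform of `h`. -/
noncomputable def absc (h : ℝ → ℝ) : ENNReal :=
  ⨆ l ∈ {l : ℝ | 0 < l ∧ Integrable (fun s => h s * Real.exp (l * s))}, ENNReal.ofReal l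

/-!
If `f * exp (b * ·)` is integrable and `f` is nonincreasing, averaging over a window of length
one gives the pointwise decay `f u ≤ C * exp (-(b * u))`. Plugging this into the
convolution yields `(g * f) s ≤ C * (∫ g τ * exp (b * τ)) * exp (-(b * s))`, so
`f * (g * f) * exp ((a + b) * ·)` is dominated by a multiple of `f * exp (a * ·)`. Hence every
`a` admissible for `f` and every `b` admissible for both `f` and `g` make `a + b` admissible for
`f * (g * f)`. Boundedness makes the admissible exponents downward closed, so any `b` below
`min (absc g) (absc f)` will do.
-/

open Real Set Filter

theorem ENNReal.add_le_of_forall_lt {a b c : ENNReal} (ha : a ≠ 0) (hb : b ≠ 0)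
    (h : ∀ a' < a, ∀ b' < b, a' + b' ≤ c) : a + b ≤ c := by
  rw [← iSup_lt_eq_self a, ← iSup_lt_eq_self b]
  exact biSup_add_biSup_le' (p := (· < a)) (q := (· < b)) ⟨0, pos_iff_ne_zero.2 ha⟩
    ⟨0, pos_iff_ne_zero.2 hb⟩ h

theorem aestronglyMeasurable_of_integrable_mul_exp {g : ℝ → ℝ} {b : ℝ}
    (hgb : Integrable fun s => g s * exp (b * s)) : AEStronglyMeasurable g := by
  refine (hgb.aestronglyMeasurable.mul (continuous_exp.comp
    (continuous_const.mul continuous_id : Continuous fun s => -b * s)).aestronglyMeasurable).congr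
    (Eventually.of_forall fun s => ?_)
  simp [mul_assoc, ← exp_add]

theorem integrable_mul_exp_of_le {h : ℝ → ℝ} {M l l' : ℝ} (h_nn : ∀ s, 0 ≤ h s)
    (h_bdd : ∀ s, h s ≤ M) (hl' : 0 < l') (hle : l' ≤ l)
    (hint : Integrable fun s => h s * exp (l * s)) :
    Integrable fun s => h s * exp (l' * s) := by
  have hmeas : AEStronglyMeasurable (fun s => h s * exp (l' * s)) volume :=
    (aestronglyMeasurable_of_integrable_mul_exp hint).mul
      (continuous_exp.comp (continuous_const.mul continuous_id)).aestronglyMeasurable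
  have hdom : Integrable fun s =>
      h s * exp (l * s) + (Iic 0).indicator (fun s => M * exp (l' * s)) s :=
    hint.add ((integrable_indicator_iff measurableSet_Iic).2
      ((integrableOn_exp_mul_Iic hl' 0).const_mul M))
  refine hdom.mono' hmeas (Eventually.of_forall fun s => ?_)
  rw [norm_of_nonneg (mul_nonneg (h_nn s) (exp_pos _).le)]
  rcases le_or_gt s 0 with hs | hs
  · rw [indicator_of_mem (mem_Iic.2 hs)]
    exact le_add_of_nonneg_of_le (mul_nonneg (h_nn s) (exp_pos _).le)
      (mul_le_mul_of_nonneg_right (h_bdd s) (exp_pos _).le)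
  · rw [indicator_of_notMem (notMem_Iic.2 hs), add_zero]
    exact mul_le_mul_of_nonneg_left (exp_le_exp.2 (mul_le_mul_of_nonneg_right hle hs.le))
      (h_nn s)

theorem ofReal_le_absc {h : ℝ → ℝ} {l : ℝ} (hl : 0 < l)
    (hint : Integrable fun s => h s * exp (l * s)) : ENNReal.ofReal l ≤ absc h :=
  le_biSup (fun l => ENNReal.ofReal l) (show l ∈ {l | 0 < l ∧ _} from ⟨hl, hint⟩)

theorem exists_integrable_of_lt_absc {h : ℝ → ℝ} {c : ENNReal} (hc : c < absc h) :
    ∃ l, 0 < l ∧ (Integrable fun s => h s * exp (l * s)) ∧ c < ENNReal.ofReal l := by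
  simpa [absc, lt_iSup_iff, and_assoc] using hc

theorem integrable_mul_exp_of_lt_absc {h : ℝ → ℝ} {M l : ℝ} (h_nn : ∀ s, 0 ≤ h s)
    (h_bdd : ∀ s, h s ≤ M) (hl : 0 < l) (hlt : ENNReal.ofReal l < absc h) :
    Integrable fun s => h s * exp (l * s) := by
  obtain ⟨l', -, hint, hll'⟩ := exists_integrable_of_lt_absc hlt
  exact integrable_mul_exp_of_le h_nn h_bdd hl
    ((ENNReal.ofReal_lt_ofReal_iff_of_nonneg hl.le).1 hll').le hint

theorem Antitone.mul_exp_le_integral {f : ℝ → ℝ} {b : ℝ} (hf_nn : ∀ s, 0 ≤ f s)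
    (hf_mono : Antitone f) (hb : 0 ≤ b) (hint : Integrable fun s => f s * exp (b * s)) (s : ℝ) :
    f s * exp (b * s) ≤ (∫ t, f t * exp (b * t)) * exp b := by
  have hwindow : ∫ _ in Icc (s - 1) s, f s * exp (b * (s - 1))
      ≤ ∫ t in Icc (s - 1) s, f t * exp (b * t) :=
    setIntegral_mono_on (integrableOn_const (by simp)) hint.integrableOn measurableSet_Icc
      fun t ht => mul_le_mul (hf_mono ht.2) (exp_le_exp.2 (mul_le_mul_of_nonneg_left ht.1 hb))
        (exp_pos _).le (hf_nn t)
  have hwhole : ∫ t in Icc (s - 1) s, f t * exp (b * t) ≤ ∫ t, f t * exp (b * t) :=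
    setIntegral_le_integral hint (Eventually.of_forall fun t => mul_nonneg (hf_nn t) (exp_pos _).le)
  have hconst : ∫ _ in Icc (s - 1) s, f s * exp (b * (s - 1)) = f s * exp (b * (s - 1)) := by
    simp [measureReal_def, Real.volume_Icc]
  calc f s * exp (b * s) = f s * exp (b * (s - 1)) * exp b := by
        rw [mul_assoc, ← exp_add]; ring_nf
    _ ≤ (∫ t, f t * exp (b * t)) * exp b :=
        mul_le_mul_of_nonneg_right (by linarith) (exp_pos _).le

theorem integral_mul_comp_sub_le {f g : ℝ → ℝ} {b C : ℝ} (hf_nn : ∀ s, 0 ≤ f s)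
    (hg_nn : ∀ s, 0 ≤ g s) (hfC : ∀ u, f u * exp (b * u) ≤ C)
    (hgb : Integrable fun s => g s * exp (b * s)) (s : ℝ) :
    ∫ τ, g τ * f (s - τ) ≤ C * (∫ τ, g τ * exp (b * τ)) * exp (-(b * s)) := by
  have hpointwise : ∀ τ, g τ * f (s - τ) ≤ C * exp (-(b * s)) * (g τ * exp (b * τ)) := by
    intro τ
    have hf : f (s - τ) ≤ C * exp (-(b * s)) * exp (b * τ) := by
      calc f (s - τ) = f (s - τ) * exp (b * (s - τ)) * (exp (-(b * s)) * exp (b * τ)) := by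
            rw [mul_assoc, ← exp_add, ← exp_add]; ring_nf; simp
        _ ≤ C * (exp (-(b * s)) * exp (b * τ)) :=
            mul_le_mul_of_nonneg_right (hfC _) (by positivity)
        _ = C * exp (-(b * s)) * exp (b * τ) := by ring
    calc g τ * f (s - τ) ≤ g τ * (C * exp (-(b * s)) * exp (b * τ)) :=
          mul_le_mul_of_nonneg_left hf (hg_nn τ)
      _ = C * exp (-(b * s)) * (g τ * exp (b * τ)) := by ring
  calc ∫ τ, g τ * f (s - τ) ≤ ∫ τ, C * exp (-(b * s)) * (g τ * exp (b * τ)) :=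
        integral_mono_of_nonneg (Eventually.of_forall fun τ => mul_nonneg (hg_nn τ) (hf_nn _))
          (hgb.const_mul _) (Eventually.of_forall hpointwise)
    _ = C * (∫ τ, g τ * exp (b * τ)) * exp (-(b * s)) := by
        rw [integral_const_mul]; ring

theorem aestronglyMeasurable_integral_mul_comp_sub {f g : ℝ → ℝ} (hf : Measurable f)
    (hg : AEStronglyMeasurable g) : AEStronglyMeasurable fun s => ∫ τ, g τ * f (s - τ) :=
  (hg.comp_snd.mul (hf.comp (measurable_fst.sub measurable_snd)).aestronglyMeasurable
    : AEStronglyMeasurable (fun p : ℝ × ℝ => g p.2 * f (p.1 - p.2))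
      ((volume : Measure ℝ).prod volume)).integral_prod_right'

theorem integrable_mul_integral_mul_comp_sub_mul_exp {f g : ℝ → ℝ} {a b : ℝ}
    (hf_nn : ∀ s, 0 ≤ f s) (hf_mono : Antitone f) (hg_nn : ∀ s, 0 ≤ g s) (hb : 0 ≤ b)
    (hfa : Integrable fun s => f s * exp (a * s)) (hfb : Integrable fun s => f s * exp (b * s))
    (hgb : Integrable fun s => g s * exp (b * s)) :
    Integrable fun s => (f s * ∫ τ, g τ * f (s - τ)) * exp ((a + b) * s) := by
  obtain ⟨K, hconv⟩ : ∃ K, ∀ s, ∫ τ, g τ * f (s - τ) ≤ K * exp (-(b * s)) :=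
    ⟨_, integral_mul_comp_sub_le hf_nn hg_nn (hf_mono.mul_exp_le_integral hf_nn hb hfb) hgb⟩
  have hmeas : AEStronglyMeasurable
      (fun s => (f s * ∫ τ, g τ * f (s - τ)) * exp ((a + b) * s)) volume :=
    (hf_mono.measurable.aestronglyMeasurable.mul
      (aestronglyMeasurable_integral_mul_comp_sub hf_mono.measurable
        (aestronglyMeasurable_of_integrable_mul_exp hgb))).mul
      (continuous_exp.comp (continuous_const.mul continuous_id)).aestronglyMeasurable
  refine (hfa.const_mul K).mono' hmeas (Eventually.of_forall fun s => ?_)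
  have hconv_nn : 0 ≤ ∫ τ, g τ * f (s - τ) :=
    integral_nonneg fun τ => mul_nonneg (hg_nn τ) (hf_nn _)
  rw [norm_of_nonneg (by positivity [hf_nn s])]
  calc (f s * ∫ τ, g τ * f (s - τ)) * exp ((a + b) * s)
      ≤ (f s * (K * exp (-(b * s)))) * exp ((a + b) * s) := by
        gcongr
        · exact hf_nn s
        · exact hconv s
    _ = K * (f s * exp (a * s)) := by
        have hexp : exp (-(b * s)) * exp ((a + b) * s) = exp (a * s) := by
          rw [← exp_add]; ring_nf
        linear_combination (f s * K) * hexp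

theorem stmt_10_general (f g : ℝ → ℝ)
    (hf_nn : ∀ s, 0 ≤ f s) (hf_mono : Antitone f) (hf_bdd : ∃ M, ∀ s, f s ≤ M)
    (hg_nn : ∀ s, 0 ≤ g s) (hg_bdd : ∃ M, ∀ s, g s ≤ M)
    (hf_abs : 0 < absc f) (hg_abs : 0 < absc g) :
    absc f + min (absc g) (absc f) ≤ absc (fun s => f s * ∫ τ, g τ * f (s - τ)) := by
  obtain ⟨Mf, hMf⟩ := hf_bdd
  obtain ⟨Mg, hMg⟩ := hg_bdd
  refine ENNReal.add_le_of_forall_lt hf_abs.ne' (lt_min hg_abs hf_abs).ne' fun x hx y hy => ?_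
  obtain ⟨a, ha, hfa, hxa⟩ := exists_integrable_of_lt_absc hx
  obtain ⟨b, -, hyb, hb_min⟩ := ENNReal.lt_iff_exists_real_btwn.1 hy
  have hb : 0 < b := ENNReal.ofReal_pos.1 (hyb.trans_le' bot_le)
  have hgb := integrable_mul_exp_of_lt_absc hg_nn hMg hb (hb_min.trans_le (min_le_left _ _))
  have hfb := integrable_mul_exp_of_lt_absc hf_nn hMf hb (hb_min.trans_le (min_le_right _ _))
  calc x + y ≤ ENNReal.ofReal a + ENNReal.ofReal b := add_le_add hxa.le hyb.le
    _ = ENNReal.ofReal (a + b) := (ENNReal.ofReal_add ha.le hb.le).symm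
    _ ≤ _ := ofReal_le_absc (add_pos ha hb)
        (integrable_mul_integral_mul_comp_sub_mul_exp hf_nn hf_mono hg_nn hb.le hfa hfb hgb)

theorem stmt_10 (f g : ℝ → ℝ)
    (hf_nn : ∀ s, 0 ≤ f s) (hf_mono : Antitone f) (hf_bdd : ∃ M, ∀ s, f s ≤ M)
    (hg_nn : ∀ s, 0 ≤ g s) (hg_bdd : ∃ M, ∀ s, g s ≤ M) (hg_int : Integrable g)
    (hf_abs : 0 < absc f) (hg_abs : 0 < absc g) :
    absc f + min (absc g) (absc f) ≤ absc (fun s => f s * ∫ τ, g τ * f (s - τ)) :=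
  stmt_10_general f g hf_nn hf_mono hf_bdd hg_nn hg_bdd hf_abs hg_abs
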